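/- Let n_l ≥ 1 and for each α ∈ {1, …, n_l} let v_{α,1}, …, v_{α,N_α} be real numbers (the increments of the pairs assigned to lag class h_α) with N_α ≥ 1 and S_α = Σ_{i=1}^{N_α} v_{α,i}² > 0. Define the log composite likelihood L_C : (0,∞)^{n_l} → ℝ by L_C(γ_1, …, γ_{n_l}) = Σ_{α=1}^{n_l} Σ_{i=1}^{N_α} log( (4πγ_α)^{−1/2} exp(−v_{α,i}²/(4γ_α)) ). Then L_C attains its unique global maximum at the point whose α-th coordinate is the Matheron empirical variogram estimator γ̂_α = (1/(2N_α)) Σ_{i=1}^{N_α} v_{α,i}². -/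
import Mathlib

open Real Finset

lemma matheron_key (n S x g : ℝ) (hn : 0 < n) (hS : 0 < S) (hx : 0 < x)
    (hg : g = S / (2 * n)) :
    (-((n:ℝ)/2) * Real.log (4 * Real.pi * x) - S/(4*x)
      ≤ -(n/2) * Real.log (4 * Real.pi * g) - S/(4*g)) ∧
    (x ≠ g →
      -(n/2) * Real.log (4 * Real.pi * x) - S/(4*x)
      < -(n/2) * Real.log (4 * Real.pi * g) - S/(4*g)) := by
  have hπ : 0 < Real.pi := Real.pi_pos
  have hgpos : 0 < g := by rw [hg]; positivity
  have hS' : S = 2 * n * g := by rw [hg]; field_simp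
  have hlogx : Real.log (4 * Real.pi * x) = Real.log (4 * Real.pi) + Real.log x :=
    Real.log_mul (by positivity) hx.ne'
  have hlogg : Real.log (4 * Real.pi * g) = Real.log (4 * Real.pi) + Real.log g :=
    Real.log_mul (by positivity) hgpos.ne'
  have hlogt : Real.log (g / x) = Real.log g - Real.log x := Real.log_div hgpos.ne' hx.ne'
  have hexpr : (-(n/2) * Real.log (4 * Real.pi * g) - S/(4*g))
      - (-(n/2) * Real.log (4 * Real.pi * x) - S/(4*x))
      = (n/2) * ((g/x) - 1 - Real.log (g/x)) := by
    rw [hlogx, hlogg, hlogt, hS']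
    field_simp
    ring
  constructor
  · have h := Real.log_le_sub_one_of_pos (show (0:ℝ) < g/x by positivity)
    nlinarith
  · intro hne
    have ht1 : g / x ≠ 1 := by
      intro h
      apply hne
      field_simp at h
      linarith
    have h := Real.log_lt_sub_one_of_pos (show (0:ℝ) < g/x by positivity) ht1
    nlinarith

lemma matheron_inner_sum {m : ℕ} (w : Fin m → ℝ) (x : ℝ) (hx : 0 < x) :
    ∑ i, Real.log ((4 * Real.pi * x) ^ (-(1 : ℝ) / 2) *
        Real.exp (-(w i ^ 2) / (4 * x)))
      = -((m : ℝ)/2) * Real.log (4 * Real.pi * x) - (∑ i, w i ^ 2)/(4*x) := by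
  have hπ : 0 < Real.pi := Real.pi_pos
  have hb : (0:ℝ) < 4 * Real.pi * x := by positivity
  have hterm : ∀ i, Real.log ((4 * Real.pi * x) ^ (-(1 : ℝ) / 2) *
        Real.exp (-(w i ^ 2) / (4 * x)))
      = (-(1:ℝ)/2) * Real.log (4 * Real.pi * x) + (-(w i ^ 2) / (4 * x)) := by
    intro i
    rw [Real.log_mul (by positivity) (Real.exp_ne_zero _), Real.log_rpow hb,
      Real.log_exp]
  rw [Finset.sum_congr rfl fun i _ => hterm i, Finset.sum_add_distrib,
    Finset.sum_const, ← Finset.sum_div]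
  simp [Finset.card_univ]
  ring

/-- The Gaussian pairwise-difference log composite likelihood over `n_l` lag classes,
`L_C(γ_1,…,γ_{n_l}) = Σ_α Σ_i log((4πγ_α)^{−1/2} exp(−v_{α,i}²/(4γ_α)))`,
attains its unique global maximum on `(0,∞)^{n_l}` at the vector of Matheron
empirical variogram estimators `γ̂_α = (Σ_i v_{α,i}²)/(2N_α)`. -/
theorem matheron_maximizes_composite_likelihood
    (nl : ℕ) (hnl : 1 ≤ nl) (N : Fin nl → ℕ) (hN : ∀ α, 1 ≤ N α)
    (v : (α : Fin nl) → Fin (N α) → ℝ)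
    (hS : ∀ α, 0 < ∑ i, v α i ^ 2)
    (LC : (Fin nl → ℝ) → ℝ)
    (hLC : ∀ γ : Fin nl → ℝ, (∀ α, 0 < γ α) →
      LC γ = ∑ α, ∑ i, Real.log ((4 * Real.pi * γ α) ^ (-(1 : ℝ) / 2) *
        Real.exp (-(v α i ^ 2) / (4 * γ α))))
    (γhat : Fin nl → ℝ)
    (hγhat : ∀ α, γhat α = (∑ i, v α i ^ 2) / (2 * N α)) :
    (∀ γ : Fin nl → ℝ, (∀ α, 0 < γ α) → LC γ ≤ LC γhat) ∧
      (∀ γ : Fin nl → ℝ, (∀ α, 0 < γ α) → γ ≠ γhat → LC γ < LC γhat) := by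
  have hNpos : ∀ α, (0:ℝ) < (N α : ℝ) := fun α => by
    exact_mod_cast Nat.lt_of_lt_of_le Nat.zero_lt_one (hN α)
  have hγhatpos : ∀ α, 0 < γhat α := fun α => by
    rw [hγhat α]; have := hS α; have := hNpos α; positivity
  set F : (α : Fin nl) → ℝ → ℝ := fun α x =>
    -((N α : ℝ)/2) * Real.log (4 * Real.pi * x) - (∑ i, v α i ^ 2)/(4*x) with hF
  have hLCF : ∀ γ : Fin nl → ℝ, (∀ α, 0 < γ α) → LC γ = ∑ α, F α (γ α) := by
    intro γ hγ
    rw [hLC γ hγ]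
    exact Finset.sum_congr rfl fun α _ => matheron_inner_sum (v α) (γ α) (hγ α)
  have hkey : ∀ γ : Fin nl → ℝ, (∀ α, 0 < γ α) → ∀ α,
      F α (γ α) ≤ F α (γhat α) ∧ (γ α ≠ γhat α → F α (γ α) < F α (γhat α)) := by
    intro γ hγ α
    exact matheron_key (N α) (∑ i, v α i ^ 2) (γ α) (γhat α)
      (hNpos α) (hS α) (hγ α) (hγhat α)
  constructor
  · intro γ hγ
    rw [hLCF γ hγ, hLCF γhat hγhatpos]
    exact Finset.sum_le_sum fun α _ => (hkey γ hγ α).1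
  · intro γ hγ hne
    rw [hLCF γ hγ, hLCF γhat hγhatpos]
    obtain ⟨β, hβ⟩ := Function.ne_iff.mp hne
    exact Finset.sum_lt_sum (fun α _ => (hkey γ hγ α).1)
      ⟨β, Finset.mem_univ β, (hkey γ hγ β).2 hβ⟩
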